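/- arXiv:1411.1246 — 2 statements merged into one kernel-verified Lean document; each statement's English description precedes it below -/
import Mathlib

section
/- Let p be a prime with p > 2. Then W_2 = {2p, 2p²−2p−2} ∪ { p^n(2p−2) + 2p−2 : n ≥ 2 }. -/
/-- The shift `λ ∥ n` of a weight `λ` linked to zero (i.e. `λ ≡ 0` or `λ ≡ 2p−2 mod 2p`). -/
def shift (p lam n : ℕ) : ℕ :=
  if lam % (2 * p) = 0 then
    (if Even n then p * (lam + n) else p * (lam + n) + p - 2)
  else
    (if Even n then p * (lam - n) else p * (lam - n) + p - 2)

/-- The sets `W_q` of maximally untwisted `q`-cohomological weights, defined recursively: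
`W_0 = {0}` and `W_q = { (p^n · λᵢ) ∥ (q−i) : n ≥ 0, 0 ≤ i < q, λᵢ ∈ W_i }`. -/
def W (p : ℕ) : ℕ → Set ℕ
  | 0 => {0}
  | q + 1 => {mu | ∃ (n i : ℕ) (_ : i < q + 1) (lam : ℕ),
      lam ∈ W p i ∧ mu = shift p (p ^ n * lam) (q + 1 - i)}

/-! `W₂` is obtained from `W₀ = {0}` by the shift `∥ 2` and from `W₁ = {2p − 2}` by the shift
`∥ 1`. Since `2p − 2 < 2p`, the unscaled weight `2p − 2` is shifted downwards to `2p² − 2p − 2`,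
whereas each `pⁿ(2p − 2)` with `n ≥ 1` is divisible by `2p` and is shifted upwards to
`pⁿ⁺¹(2p − 2) + 2p − 2`. -/

section Shift

variable {p lam n : ℕ}

theorem shift_of_dvd_of_even (h : 2 * p ∣ lam) (hn : Even n) : shift p lam n = p * (lam + n) := by
  simp [shift, Nat.mod_eq_zero_of_dvd h, hn]

theorem shift_of_dvd_of_odd (h : 2 * p ∣ lam) (hn : Odd n) :
    shift p lam n = p * (lam + n) + p - 2 := by
  simp [shift, Nat.mod_eq_zero_of_dvd h, Nat.not_even_iff_odd.2 hn]

theorem shift_of_not_dvd_of_odd (h : ¬ 2 * p ∣ lam) (hn : Odd n) :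
    shift p lam n = p * (lam - n) + p - 2 := by
  simp [shift, Nat.dvd_iff_mod_eq_zero.not.1 h, Nat.not_even_iff_odd.2 hn]

end Shift

theorem shift_zero_two (p : ℕ) : shift p 0 2 = 2 * p := by
  rw [shift_of_dvd_of_even (dvd_zero _) even_two]
  ring

theorem shift_zero_one (p : ℕ) : shift p 0 1 = 2 * p - 2 := by
  rw [shift_of_dvd_of_odd (dvd_zero _) odd_one]
  omega

theorem shift_two_mul_sub_two_one {p : ℕ} (hp : 2 ≤ p) :
    shift p (2 * p - 2) 1 = 2 * p ^ 2 - 2 * p - 2 := by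
  have hlt : ¬ 2 * p ∣ 2 * p - 2 := Nat.not_dvd_of_pos_of_lt (by omega) (by omega)
  rw [shift_of_not_dvd_of_odd hlt odd_one, show 2 * p - 2 - 1 = 2 * p - 3 by omega, Nat.mul_sub,
    show p * (2 * p) = 2 * p ^ 2 by ring]
  have : 3 * p ≤ 2 * p ^ 2 := by nlinarith
  omega

theorem shift_pow_succ_mul_one {p : ℕ} (hp : 0 < p) (m : ℕ) :
    shift p (p ^ (m + 1) * (2 * p - 2)) 1 = p ^ (m + 2) * (2 * p - 2) + (2 * p - 2) := by
  have hdvd : 2 * p ∣ p ^ (m + 1) * (2 * p - 2) :=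
    ⟨p ^ m * (p - 1), by rw [show 2 * p - 2 = 2 * (p - 1) by omega, pow_succ]; ring⟩
  rw [shift_of_dvd_of_odd hdvd odd_one, Nat.mul_add, Nat.mul_one,
    show p * (p ^ (m + 1) * (2 * p - 2)) = p ^ (m + 2) * (2 * p - 2) by ring]
  omega

section W

variable {p q mu lam : ℕ}

theorem mem_W_zero : lam ∈ W p 0 ↔ lam = 0 := by
  rw [W, Set.mem_singleton_iff]

theorem mem_W_succ : mu ∈ W p (q + 1) ↔
    ∃ n i, i < q + 1 ∧ ∃ lam ∈ W p i, mu = shift p (p ^ n * lam) (q + 1 - i) := by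
  simp [W]

end W

theorem W_one (p : ℕ) : W p 1 = {2 * p - 2} := by
  ext x
  simp [mem_W_succ, mem_W_zero, shift_zero_one]

theorem W_two_eq_insert_range (p : ℕ) :
    W p 2 = insert (2 * p) (Set.range fun n ↦ shift p (p ^ n * (2 * p - 2)) 1) := by
  ext x
  simp only [mem_W_succ, Nat.lt_succ_iff_lt_or_eq, or_and_right, exists_or,
    exists_eq_left, mem_W_zero, W_one, Set.mem_singleton_iff, Set.mem_insert_iff, Set.mem_range]
  simp [shift_zero_two, eq_comm]

theorem range_shift_pow_mul_one {p : ℕ} (hp : 2 ≤ p) :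
    (Set.range fun n ↦ shift p (p ^ n * (2 * p - 2)) 1) =
      insert (2 * p ^ 2 - 2 * p - 2)
        {x | ∃ n : ℕ, 2 ≤ n ∧ x = p ^ n * (2 * p - 2) + (2 * p - 2)} := by
  ext x
  simp only [Set.mem_range, Set.mem_insert_iff, Set.mem_ofPred_eq]
  constructor
  · rintro ⟨_ | m, rfl⟩
    · simp [shift_two_mul_sub_two_one hp]
    · exact Or.inr ⟨m + 2, by omega, shift_pow_succ_mul_one (by omega) m⟩
  · rintro (rfl | ⟨n, hn, rfl⟩)
    · exact ⟨0, by simp [shift_two_mul_sub_two_one hp]⟩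
    · obtain ⟨m, rfl⟩ : ∃ m, n = m + 2 := ⟨n - 2, by omega⟩
      exact ⟨m + 1, shift_pow_succ_mul_one (by omega) m⟩

theorem stmt_4_general (p : ℕ) (h2 : 2 < p) :
    W p 2 = ({2 * p, 2 * p ^ 2 - 2 * p - 2} : Set ℕ)
      ∪ {x | ∃ n : ℕ, 2 ≤ n ∧ x = p ^ n * (2 * p - 2) + (2 * p - 2)} := by
  rw [W_two_eq_insert_range, range_shift_pow_mul_one h2.le, Set.insert_union,
    Set.singleton_union]

/-- For a prime `p > 2`, `W_2 = {2p, 2p² − 2p − 2} ∪ { pⁿ(2p−2) + 2p − 2 : n ≥ 2 }`. -/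
theorem stmt_4 (p : ℕ) (hp : p.Prime) (h2 : 2 < p) :
    W p 2 = ({2 * p, 2 * p ^ 2 - 2 * p - 2} : Set ℕ)
      ∪ {x | ∃ n : ℕ, 2 ≤ n ∧ x = p ^ n * (2 * p - 2) + (2 * p - 2)} :=
  stmt_4_general p h2
end

section
/- Let p be a prime and q a natural number with p > q ≥ 1. Then every element λ of W_q satisfies λ ≥ 2p−2. In particular, in forming W_{q'} for q' ≤ q the subtraction λ−n occurring in the shift operation never goes below zero. -/
/-!
Write an element of `W_q` as `(p ^ n * λᵢ) ∥ m` with `λᵢ ∈ W_i` and `m = q - i ≥ 1`. If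
`p ^ n * λᵢ ≡ 0 mod 2p` the shift adds, giving at least `2p` (`m` even, so `m ≥ 2`) or
`p + (p - 2)` (`m` odd). Otherwise `λᵢ ≠ 0`, so `i ≥ 1` since `W_0 = {0}`, and by induction
`λᵢ ≥ 2p - 2`; as `m ≤ q - 1 ≤ p - 2`, the result is at least `p * (2p - 2 - m) ≥ p * p`.
-/

theorem mul_sub_le_shift {p : ℕ} (hp : 2 ≤ p) (lam n : ℕ) : p * (lam - n) ≤ shift p lam n := by
  have : p * (lam - n) ≤ p * (lam + n) := Nat.mul_le_mul_left _ (by omega)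
  unfold shift
  split_ifs <;> omega

theorem two_mul_sub_two_le_shift_of_mod_eq_zero {p lam n : ℕ} (hlam : lam % (2 * p) = 0)
    (hn : 1 ≤ n) : 2 * p - 2 ≤ shift p lam n := by
  unfold shift
  rw [if_pos hlam]
  split_ifs with hev
  · have : p * 2 ≤ p * (lam + n) := Nat.mul_le_mul_left _ (by rcases hev with ⟨t, ht⟩; omega)
    omega
  · have : p * 1 ≤ p * (lam + n) := Nat.mul_le_mul_left _ (by omega)
    omega

theorem two_mul_sub_two_le_shift {p lam n : ℕ} (hp : 2 ≤ p) (hlam : 2 * p - 2 ≤ lam)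
    (hn : n ≤ p - 2) : 2 * p - 2 ≤ shift p lam n :=
  calc 2 * p - 2 ≤ p * p := (Nat.sub_le _ _).trans (Nat.mul_le_mul_right p hp)
    _ ≤ p * (lam - n) := Nat.mul_le_mul_left _ (by omega)
    _ ≤ shift p lam n := mul_sub_le_shift hp lam n

theorem stmt_7_general (p q : ℕ) (hq : q < p) (hq1 : 1 ≤ q) :
    ∀ lam ∈ W p q, 2 * p - 2 ≤ lam := by
  induction q using Nat.strong_induction_on with
  | _ q ih =>
  obtain ⟨k, rfl⟩ := Nat.exists_eq_add_of_le' hq1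
  rw [W]
  rintro _ ⟨n, i, hi, lam, hlam, rfl⟩
  by_cases hmod : p ^ n * lam % (2 * p) = 0
  · exact two_mul_sub_two_le_shift_of_mod_eq_zero hmod (by omega)
  have hi0 : i ≠ 0 := by
    rintro rfl
    rw [W, Set.mem_singleton_iff] at hlam
    subst hlam
    simp at hmod
  have hlam_ge : 2 * p - 2 ≤ lam := ih i hi (by omega) (by omega) lam hlam
  have hlam_le : lam ≤ p ^ n * lam := Nat.le_mul_of_pos_left _ (pow_pos (by omega) n)
  exact two_mul_sub_two_le_shift (by omega) (hlam_ge.trans hlam_le) (by omega)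

/-- For a prime `p` and `p > q ≥ 1`, every element of `W_q` is at least `2p − 2`. -/
theorem stmt_7 (p q : ℕ) (hp : p.Prime) (hq : q < p) (hq1 : 1 ≤ q) :
    ∀ lam ∈ W p q, 2 * p - 2 ≤ lam :=
  stmt_7_general p q hq hq1
end
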